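/- (Spanning-set criterion for Lie bialgebroids.) Let (L, [·,·], ρ) and (L', [·,·]', ρ') be a dual pair of Lie–Rinehart algebras over R, and let S ⊆ L be a subset that spans L as an R-module. Suppose: (B1) D(a₁,a₂)(α₁,α₂) = 0 for all a₁, a₂ ∈ S and all α₁, α₂ ∈ L'; (B2) E(a,α)(f) = 0 for all a ∈ S, α ∈ L' and f ∈ R; and (B3) ρ'(d f)(g) + ρ'(d g)(f) = 0 for all f, g ∈ R. Then D(a₁,a₂)(α₁,α₂) = 0 for all a₁, a₂ ∈ L and α₁, α₂ ∈ L', i.e. the pair (L, L') satisfies the Lie bialgebroid equation. -/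

import Mathlib

/-- A Lie–Rinehart algebra over a commutative `ℝ`-algebra `R`. -/
structure LieRinehart (R : Type*) [CommRing R] [Algebra ℝ R]
    (L : Type*) [AddCommGroup L] [Module R L] where
  bracket : L → L → L
  bracket_add_left : ∀ x y z : L, bracket (x + y) z = bracket x z + bracket y z
  bracket_add_right : ∀ x y z : L, bracket x (y + z) = bracket x y + bracket x z
  bracket_real_left : ∀ (r : ℝ) (x y : L),
    bracket ((algebraMap ℝ R r) • x) y = (algebraMap ℝ R r) • bracket x y
  bracket_real_right : ∀ (r : ℝ) (x y : L),
    bracket x ((algebraMap ℝ R r) • y) = (algebraMap ℝ R r) • bracket x y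
  bracket_antisymm : ∀ x y : L, bracket x y = - bracket y x
  bracket_jacobi : ∀ x y z : L,
    bracket x (bracket y z) = bracket (bracket x y) z + bracket y (bracket x z)
  anchor : L →ₗ[R] Derivation ℝ R R
  anchor_bracket : ∀ x y : L, anchor (bracket x y) = ⁅anchor x, anchor y⁆
  leibniz : ∀ (f : R) (x y : L),
    bracket x (f • y) = f • bracket x y + (anchor x f) • y

/-- A dual pair of Lie–Rinehart algebras over `R`: two Lie–Rinehart algebras `L`, `L'`
with a nondegenerate `R`-bilinear pairing, Lie derivative operators `𝓛 : L × L' → L'`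
and `𝓛 : L' × L → L` characterized by the usual formulas, and a map `d : R → L'`
characterized by `⟨a, d f⟩ = ρ(a)(f)`. -/
structure LieRinehartDualPair (R : Type*) [CommRing R] [Algebra ℝ R]
    (L L' : Type*) [AddCommGroup L] [Module R L] [AddCommGroup L'] [Module R L'] where
  lr : LieRinehart R L
  lr' : LieRinehart R L'
  pair : L →ₗ[R] L' →ₗ[R] R
  nondeg_left : ∀ a : L, (∀ α : L', pair a α = 0) → a = 0
  nondeg_right : ∀ α : L', (∀ a : L, pair a α = 0) → α = 0
  lie : L → L' → L'
  lie' : L' → L → L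
  lie_spec : ∀ (a a' : L) (α : L'),
    pair a' (lie a α) = lr.anchor a (pair a' α) - pair (lr.bracket a a') α
  lie'_spec : ∀ (α α' : L') (a : L),
    pair (lie' α a) α' = lr'.anchor α (pair a α') - pair a (lr'.bracket α α')
  d : R → L'
  d_spec : ∀ (a : L) (f : R), pair a (d f) = lr.anchor a f

variable {R : Type*} [CommRing R] [Algebra ℝ R]
variable {L L' : Type*} [AddCommGroup L] [Module R L] [AddCommGroup L'] [Module R L']

/-- `(δa)(α₁,α₂) = ρ'(α₁)⟨a,α₂⟩ − ρ'(α₂)⟨a,α₁⟩ − ⟨a,[α₁,α₂]'⟩`. -/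
def LieRinehartDualPair.delta (P : LieRinehartDualPair R L L') (a : L) (α₁ α₂ : L') : R :=
  P.lr'.anchor α₁ (P.pair a α₂) - P.lr'.anchor α₂ (P.pair a α₁)
    - P.pair a (P.lr'.bracket α₁ α₂)

/-- `[δa₁, a₂](α₁,α₂) = −ρ(a₂)((δa₁)(α₁,α₂)) + (δa₁)(𝓛_{a₂}α₁, α₂) + (δa₁)(α₁, 𝓛_{a₂}α₂)`. -/
def LieRinehartDualPair.deltaBracket (P : LieRinehartDualPair R L L')
    (a₁ a₂ : L) (α₁ α₂ : L') : R :=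
  - P.lr.anchor a₂ (P.delta a₁ α₁ α₂) + P.delta a₁ (P.lie a₂ α₁) α₂
    + P.delta a₁ α₁ (P.lie a₂ α₂)

/-- The bialgebroid defect
`D(a₁,a₂)(α₁,α₂) = (δ[a₁,a₂])(α₁,α₂) − [δa₁,a₂](α₁,α₂) − [a₁,δa₂](α₁,α₂)`,
where `[a₁, δa₂] = −[δa₂, a₁]`. -/
def LieRinehartDualPair.D (P : LieRinehartDualPair R L L') (a₁ a₂ : L) (α₁ α₂ : L') : R :=
  P.delta (P.lr.bracket a₁ a₂) α₁ α₂ - P.deltaBracket a₁ a₂ α₁ α₂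
    + P.deltaBracket a₂ a₁ α₁ α₂

/-- `E(a,α)(f) = [ρ(a),ρ'(α)](f) − ρ'(𝓛_a α)(f) + ρ(𝓛_α a)(f) − ρ'(d f)(⟨a,α⟩)`. -/
def LieRinehartDualPair.E (P : LieRinehartDualPair R L L') (a : L) (α : L') (f : R) : R :=
  ⁅P.lr.anchor a, P.lr'.anchor α⁆ f - P.lr'.anchor (P.lie a α) f
    + P.lr.anchor (P.lie' α a) f - P.lr'.anchor (P.d f) (P.pair a α)


/-! `E(·, α, f)` is `R`-linear up to a multiple of the `(B3)` expression, so `(B2)` spreads from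
`S` to all of `L`. Once `E` vanishes identically, `D(f a₁, a₂) = f D(a₁, a₂)`: the correction
terms of `D(f a₁, a₂) - f D(a₁, a₂)` are `⟨a₁, α₂⟩ E(a₂, α₁, f) - ⟨a₁, α₁⟩ E(a₂, α₂, f)`.
Together with additivity and antisymmetry, `D` is `R`-bilinear in `(a₁, a₂)`, hence determined by
its values on `S × S`. -/

theorem LieRinehart.bracket_smul_left {M : Type*} [AddCommGroup M] [Module R M]
    (lr : LieRinehart R M) (f : R) (x y : M) :
    lr.bracket (f • x) y = f • lr.bracket x y - (lr.anchor y f) • x := by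
  rw [lr.bracket_antisymm (f • x) y, lr.leibniz, lr.bracket_antisymm y x]
  module

theorem LinearMap.eq_zero_of_span_eq_top₂ {K M N Q : Type*} [CommSemiring K]
    [AddCommMonoid M] [Module K M] [AddCommMonoid N] [Module K N] [AddCommMonoid Q] [Module K Q]
    {s : Set M} {t : Set N} (hs : Submodule.span K s = ⊤) (ht : Submodule.span K t = ⊤)
    {B : M →ₗ[K] N →ₗ[K] Q}
    (h : ∀ x ∈ s, ∀ y ∈ t, B x y = 0) : B = 0 :=
  LinearMap.ext_on hs fun x hx => LinearMap.ext_on ht fun y hy => h x hx y hy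

namespace LieRinehartDualPair

variable (P : LieRinehartDualPair R L L')

theorem ext_right {α β : L'} (h : ∀ a : L, P.pair a α = P.pair a β) : α = β :=
  sub_eq_zero.mp <| P.nondeg_right _ fun a => by rw [map_sub, h, sub_self]

theorem ext_left {a b : L} (h : ∀ α : L', P.pair a α = P.pair b α) : a = b :=
  sub_eq_zero.mp <| P.nondeg_left _ fun α => by rw [map_sub, LinearMap.sub_apply, h, sub_self]

theorem lie_add_left (a b : L) (α : L') : P.lie (a + b) α = P.lie a α + P.lie b α := by
  refine P.ext_right fun a' => ?_
  simp only [map_add, P.lie_spec, P.lr.bracket_add_left, Derivation.add_apply,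
    LinearMap.add_apply]
  ring

theorem lie_smul_left (f : R) (a : L) (α : L') :
    P.lie (f • a) α = f • P.lie a α + (P.pair a α) • P.d f := by
  refine P.ext_right fun a' => ?_
  simp only [P.lie_spec, LieRinehart.bracket_smul_left, map_add, map_sub, map_smul,
    LinearMap.sub_apply, LinearMap.smul_apply,
    Derivation.smul_apply, smul_eq_mul, P.d_spec]
  ring

theorem lie'_add_right (α : L') (a b : L) : P.lie' α (a + b) = P.lie' α a + P.lie' α b := by
  refine P.ext_left fun α' => ?_
  simp only [P.lie'_spec, map_add, LinearMap.add_apply]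
  ring

theorem lie'_smul_right (f : R) (α : L') (a : L) :
    P.lie' α (f • a) = f • P.lie' α a + (P.lr'.anchor α f) • a := by
  refine P.ext_left fun α' => ?_
  simp only [P.lie'_spec, map_add, map_smul, LinearMap.add_apply, LinearMap.smul_apply,
    smul_eq_mul, Derivation.leibniz]
  ring

theorem pair_bracket (a₁ a₂ : L) (β : L') :
    P.pair (P.lr.bracket a₁ a₂) β = P.pair a₁ (P.lie a₂ β) - P.lr.anchor a₂ (P.pair a₁ β) := by
  have h := P.lie_spec a₂ a₁ β
  rw [P.lr.bracket_antisymm a₂ a₁, map_neg, LinearMap.neg_apply] at h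
  linear_combination -h

theorem delta_add (a b : L) (α₁ α₂ : L') :
    P.delta (a + b) α₁ α₂ = P.delta a α₁ α₂ + P.delta b α₁ α₂ := by
  simp only [delta, map_add, LinearMap.add_apply]; ring

theorem delta_sub (a b : L) (α₁ α₂ : L') :
    P.delta (a - b) α₁ α₂ = P.delta a α₁ α₂ - P.delta b α₁ α₂ := by
  simp only [delta, map_sub, LinearMap.sub_apply]; ring

theorem delta_neg (a : L) (α₁ α₂ : L') : P.delta (-a) α₁ α₂ = - P.delta a α₁ α₂ := by
  simp only [delta, map_neg, LinearMap.neg_apply]; ring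

theorem delta_smul (f : R) (a : L) (α₁ α₂ : L') :
    P.delta (f • a) α₁ α₂ = f * P.delta a α₁ α₂
      + P.lr'.anchor α₁ f * P.pair a α₂ - P.lr'.anchor α₂ f * P.pair a α₁ := by
  simp only [delta, map_smul, LinearMap.smul_apply, smul_eq_mul, Derivation.leibniz]
  ring

theorem delta_add_left (a : L) (β γ α₂ : L') :
    P.delta a (β + γ) α₂ = P.delta a β α₂ + P.delta a γ α₂ := by
  simp only [delta, map_add, P.lr'.bracket_add_left, Derivation.add_apply]; ring

theorem delta_add_right (a : L) (α₁ β γ : L') :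
    P.delta a α₁ (β + γ) = P.delta a α₁ β + P.delta a α₁ γ := by
  simp only [delta, map_add, P.lr'.bracket_add_right, Derivation.add_apply]; ring

theorem delta_smul_left (f : R) (a : L) (α₁ α₂ : L') :
    P.delta a (f • α₁) α₂ = f * P.delta a α₁ α₂ := by
  simp only [delta, LieRinehart.bracket_smul_left, map_smul, map_sub,
    Derivation.smul_apply, smul_eq_mul, Derivation.leibniz]
  ring

theorem delta_smul_right (f : R) (a : L) (α₁ α₂ : L') :
    P.delta a α₁ (f • α₂) = f * P.delta a α₁ α₂ := by
  simp only [delta, P.lr'.leibniz, map_smul, map_add, Derivation.smul_apply, smul_eq_mul, Derivation.leibniz]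
  ring

theorem delta_d_left (a : L) (f : R) (α : L') :
    P.delta a (P.d f) α = P.lr'.anchor (P.d f) (P.pair a α) - P.lr.anchor (P.lie' α a) f := by
  have h := P.lie'_spec α (P.d f) a
  rw [P.d_spec, P.d_spec] at h
  simp only [delta, P.d_spec, P.lr'.bracket_antisymm (P.d f) α, map_neg]
  linear_combination h

theorem delta_d_right (a : L) (α : L') (f : R) :
    P.delta a α (P.d f) = P.lr.anchor (P.lie' α a) f - P.lr'.anchor (P.d f) (P.pair a α) := by
  have h := P.lie'_spec α (P.d f) a
  rw [P.d_spec, P.d_spec] at h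
  simp only [delta, P.d_spec]
  linear_combination -h

theorem E_add_left (a b : L) (α : L') (f : R) : P.E (a + b) α f = P.E a α f + P.E b α f := by
  simp only [E, lie_add_left, lie'_add_right, map_add, Derivation.add_apply,
    LinearMap.add_apply, Derivation.commutator_apply]
  ring

theorem E_smul_left (f : R) (a : L) (α : L') (g : R) :
    P.E (f • a) α g = f * P.E a α g
      - P.pair a α * (P.lr'.anchor (P.d f) g + P.lr'.anchor (P.d g) f) := by
  simp only [E, lie_smul_left, lie'_smul_right, map_add, map_smul,
    Derivation.add_apply, Derivation.smul_apply, LinearMap.smul_apply, smul_eq_mul,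
    Derivation.commutator_apply, Derivation.leibniz]
  ring

theorem D_add_left (a b a₂ : L) (α₁ α₂ : L') :
    P.D (a + b) a₂ α₁ α₂ = P.D a a₂ α₁ α₂ + P.D b a₂ α₁ α₂ := by
  simp only [D, deltaBracket, P.lr.bracket_add_left, delta_add, lie_add_left, delta_add_left,
    delta_add_right, map_add, Derivation.add_apply]
  ring

theorem D_swap (a₁ a₂ : L) (α₁ α₂ : L') : P.D a₂ a₁ α₁ α₂ = - P.D a₁ a₂ α₁ α₂ := by
  simp only [D]
  rw [P.lr.bracket_antisymm a₂ a₁, delta_neg]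
  ring

theorem D_smul_left (f : R) (a₁ a₂ : L) (α₁ α₂ : L') :
    P.D (f • a₁) a₂ α₁ α₂ = f * P.D a₁ a₂ α₁ α₂
      + P.pair a₁ α₂ * P.E a₂ α₁ f - P.pair a₁ α₁ * P.E a₂ α₂ f := by
  simp only [D, deltaBracket, E, LieRinehart.bracket_smul_left, delta_sub, delta_smul,
    lie_smul_left, delta_add_left, delta_add_right, delta_smul_left, delta_smul_right,
    delta_d_left, delta_d_right, pair_bracket, map_add, map_sub, map_smul,
    Derivation.smul_apply, smul_eq_mul,
    Derivation.commutator_apply, Derivation.leibniz]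
  ring

def ELinear (hB3 : ∀ f g : R, P.lr'.anchor (P.d f) g + P.lr'.anchor (P.d g) f = 0)
    (α : L') (f : R) : L →ₗ[R] R where
  toFun a := P.E a α f
  map_add' a b := P.E_add_left a b α f
  map_smul' g a := by simp [E_smul_left, hB3]

theorem E_eq_zero_of_span_eq_top {S : Set L} (hspan : Submodule.span R S = ⊤)
    (hS : ∀ a ∈ S, ∀ (α : L') (f : R), P.E a α f = 0)
    (hB3 : ∀ f g : R, P.lr'.anchor (P.d f) g + P.lr'.anchor (P.d g) f = 0)
    (a : L) (α : L') (f : R) : P.E a α f = 0 :=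
  LinearMap.congr_fun (LinearMap.ext_on (f := P.ELinear hB3 α f) (g := 0) hspan
    fun a ha => hS a ha α f) a

def DBilinear (hE : ∀ (a : L) (α : L') (f : R), P.E a α f = 0) (α₁ α₂ : L') :
    L →ₗ[R] L →ₗ[R] R :=
  LinearMap.mk₂ R (fun a₁ a₂ => P.D a₁ a₂ α₁ α₂)
    (fun a b a₂ => P.D_add_left a b a₂ α₁ α₂)
    (fun f a₁ a₂ => by simp [D_smul_left, hE])
    (fun a₁ a b => by rw [P.D_swap, P.D_add_left, P.D_swap a, P.D_swap b]; ring)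
    (fun f a₁ a₂ => by rw [P.D_swap, P.D_smul_left, hE, hE, P.D_swap]; simp)

end LieRinehartDualPair

/-- spanning-set criterion for Lie bialgebroids. -/
theorem lie_bialgebroid_spanning_criterion
    (P : LieRinehartDualPair R L L') (S : Set L)
    (hspan : Submodule.span R S = ⊤)
    (hB1 : ∀ a₁ ∈ S, ∀ a₂ ∈ S, ∀ (α₁ α₂ : L'), P.D a₁ a₂ α₁ α₂ = 0)
    (hB2 : ∀ a ∈ S, ∀ (α : L') (f : R), P.E a α f = 0)
    (hB3 : ∀ f g : R, P.lr'.anchor (P.d f) g + P.lr'.anchor (P.d g) f = 0) :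
    ∀ (a₁ a₂ : L) (α₁ α₂ : L'), P.D a₁ a₂ α₁ α₂ = 0 := by
  intro a₁ a₂ α₁ α₂
  have hE := P.E_eq_zero_of_span_eq_top hspan hB2 hB3
  have hD : P.DBilinear hE α₁ α₂ = 0 :=
    LinearMap.eq_zero_of_span_eq_top₂ hspan hspan fun x hx y hy => hB1 x hx y hy α₁ α₂
  exact LinearMap.congr_fun₂ hD a₁ a₂
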